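/- arXiv:2108.02812 — 3 statements merged into one kernel-verified Lean document; each statement's English description precedes it below -/
import Mathlib

section
/- Let R = ℚ[t, t⁻¹] be the ring of Laurent polynomials over ℚ and let M be a finitely generated R-module such that multiplication by (t − 1) : M → M is surjective. Then M is finite-dimensional as a ℚ-vector space, multiplication by (t − 1) on M is bijective, and consequently 1 is not a root of the characteristic polynomial of the ℚ-linear map M → M given by multiplication by t. -/
/-!
By Nakayama's lemma some `r ≡ 1 mod (t - 1)` annihilates `M`, and `r ≠ 0` because `t - 1` is not
a unit. Up to a unit, `r` is a polynomial `p` with `p(0) ≠ 0`; modulo `p` the inverse `t⁻¹` is a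
polynomial in `t`, so `ℚ[t,t⁻¹]/(r)` is a quotient of `ℚ[t]/(p)` and is finite-dimensional, hence
so is the finitely generated `ℚ[t,t⁻¹]/(r)`-module `M`. A surjective endomorphism of a finitely
generated module over a commutative ring is injective, and a fixed vector of `t` would lie in the
kernel of `t - 1`.
-/

open LaurentPolynomial Polynomial

theorem Module.Finite.of_isTorsionBySet {K R M : Type*} [CommSemiring K] [CommRing R]
    [Algebra K R] [AddCommGroup M] [Module K M] [Module R M] [IsScalarTower K R M]
    [Module.Finite R M]
    {I : Ideal R} [Module.Finite K (R ⧸ I)] (hM : Module.IsTorsionBySet R M I) :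
    Module.Finite K M :=
  letI := hM.module
  have : Module.Finite (R ⧸ I) M := Module.Finite.of_restrictScalars_finite R _ _
  Module.Finite.trans (R ⧸ I) M

theorem Module.exists_ne_zero_isTorsionBy_of_surjective_smul {R M : Type*} [CommRing R]
    [AddCommGroup M] [Module R M] [Module.Finite R M] {a : R} (ha : ¬IsUnit a)
    (h : Function.Surjective fun m : M => a • m) :
    ∃ r ≠ 0, Module.IsTorsionBy R M r := by
  obtain ⟨r, hr1, hr⟩ := Submodule.exists_sub_one_mem_and_smul_eq_zero_of_fg_of_le_smul
    (Ideal.span {a}) ⊤ Module.Finite.fg_top fun m _ => by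
      obtain ⟨m', rfl⟩ := h m
      exact Submodule.smul_mem_smul (Ideal.mem_span_singleton_self a) trivial
  refine ⟨r, ?_, fun m => hr m trivial⟩
  rintro rfl
  exact ha (isUnit_of_dvd_unit (Ideal.mem_span_singleton.1 hr1) (by simp))

namespace LaurentPolynomial

variable {R : Type*} [CommRing R]

theorem not_isUnit_T_one_sub_one [Nontrivial R] : ¬IsUnit (T 1 - 1 : R[T;T⁻¹]) := fun h => by
  simpa using h.map (eval₂ (RingHom.id R) 1)

theorem exists_associated_toLaurent {f : R[T;T⁻¹]} (hf : f ≠ 0) :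
    ∃ p : R[X], ¬X ∣ p ∧ Associated f (toLaurent p) := by
  obtain ⟨n, g, hg⟩ := exists_T_pow f
  have hg0 : g ≠ 0 := by
    rintro rfl
    exact hf (by simpa [(isUnit_T (n : ℤ)).mul_left_eq_zero] using hg.symm)
  obtain ⟨p, hgp, hp⟩ := g.exists_eq_pow_rootMultiplicity_mul_and_not_dvd hg0 0
  rw [map_zero, sub_zero] at hgp hp
  generalize g.rootMultiplicity 0 = k at hgp
  subst hgp
  refine ⟨p, hp, (isUnit_T (n - k : ℤ)).unit, ?_⟩
  rw [IsUnit.unit_spec, T_sub, ← mul_assoc, ← hg, map_mul, toLaurent_X_pow, mul_right_comm,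
    ← T_add]
  simp

theorem surjective_mk_comp_toLaurent {p : R[X]} (hp : IsUnit (p.coeff 0)) :
    Function.Surjective ((Ideal.Quotient.mk (Ideal.span {toLaurent p})).comp toLaurent) := by
  set π := Ideal.Quotient.mk (Ideal.span {toLaurent p})
  -- `p = X * p.divX + p(0)` with `p(0)` a unit gives `T (-1) ≡ -p(0)⁻¹ * p.divX` modulo `p`.
  obtain ⟨u, hT⟩ : ∃ u : R[X], π (T (-1)) = π (toLaurent u) := by
    obtain ⟨c, hc⟩ := hp.exists_left_inv
    refine ⟨-Polynomial.C c * p.divX, Ideal.Quotient.eq.2 <| Ideal.mem_span_singleton.2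
      ⟨C c * T (-1), ?_⟩⟩
    have hsplit : toLaurent p = T 1 * toLaurent p.divX + C (p.coeff 0) := by
      conv_lhs => rw [← X_mul_divX_add p]
      rw [map_add, map_mul, toLaurent_X, toLaurent_C]
    have hT : (T 1 * T (-1) : R[T;T⁻¹]) = 1 := by rw [← T_add]; simp
    have hC : C c * C (p.coeff 0) = 1 := by rw [← map_mul, hc, map_one]
    rw [hsplit, map_mul, map_neg, toLaurent_C]
    linear_combination (-C c * toLaurent p.divX) * hT - T (-1) * hC
  intro y
  obtain ⟨f, rfl⟩ := Ideal.Quotient.mk_surjective y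
  obtain ⟨n, g, hg⟩ := exists_T_pow f
  have hf : f = toLaurent g * T (-1) ^ n := by
    rw [hg, T_pow, mul_assoc, ← T_add]; simp
  refine ⟨g * u ^ n, ?_⟩
  show π _ = π _
  simp only [hf, map_mul, map_pow, hT]

theorem finite_quotient_span_singleton {K : Type*} [Field K] {f : K[T;T⁻¹]} (hf : f ≠ 0) :
    Module.Finite K (K[T;T⁻¹] ⧸ Ideal.span {f}) := by
  obtain ⟨p, hXp, u, hu⟩ := exists_associated_toLaurent hf
  rw [← Ideal.span_singleton_mul_right_unit u.isUnit, hu]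
  have hp0 : p ≠ 0 := by rintro rfl; exact hXp (dvd_zero X)
  have hcoeff : IsUnit (p.coeff 0) := isUnit_iff_ne_zero.2 fun h => hXp (X_dvd_iff.2 h)
  have := (AdjoinRoot.powerBasis hp0).finite
  let φ : AdjoinRoot p →ₐ[K] K[T;T⁻¹] ⧸ Ideal.span {toLaurent p} :=
    Ideal.quotientMapₐ _ toLaurentAlg <| Ideal.span_le.2 <| Set.singleton_subset_iff.2 <|
      Ideal.subset_span rfl
  exact Module.Finite.of_surjective φ.toLinearMap
    (Function.Surjective.of_comp (g := AdjoinRoot.mk p) (surjective_mk_comp_toLaurent hcoeff))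

theorem finite_of_surjective_smul {K M : Type*} [Field K] [AddCommGroup M] [Module K M]
    [Module K[T;T⁻¹] M] [IsScalarTower K K[T;T⁻¹] M] [Module.Finite K[T;T⁻¹] M]
    {a : K[T;T⁻¹]} (ha : ¬IsUnit a) (h : Function.Surjective fun m : M => a • m) :
    Module.Finite K M := by
  obtain ⟨r, hr, hM⟩ := Module.exists_ne_zero_isTorsionBy_of_surjective_smul ha h
  have := finite_quotient_span_singleton hr
  exact Module.Finite.of_isTorsionBySet ((Module.isTorsionBySet_span_singleton_iff r).2 hM)

end LaurentPolynomial

open LaurentPolynomial in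
/-- Let `M` be a finitely generated module over the Laurent polynomial ring `ℚ[t,t⁻¹]`
such that multiplication by `t - 1` is surjective on `M`. Then `M` is finite-dimensional
over `ℚ`, multiplication by `t - 1` is bijective on `M`, and `1` is not a root of the
characteristic polynomial of the `ℚ`-linear endomorphism of `M` given by multiplication
by `t`. -/
theorem finiteDimensional_of_tsubone_surjective
    {M : Type*} [AddCommGroup M] [Module ℚ M]
    [Module (LaurentPolynomial ℚ) M] [IsScalarTower ℚ (LaurentPolynomial ℚ) M]
    [Module.Finite (LaurentPolynomial ℚ) M]
    (hsurj : Function.Surjective fun m : M => (T 1 - 1 : LaurentPolynomial ℚ) • m) :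
    FiniteDimensional ℚ M ∧
    Function.Bijective (fun m : M => (T 1 - 1 : LaurentPolynomial ℚ) • m) ∧
    ∀ [FiniteDimensional ℚ M],
      ¬ ((LinearMap.lsmul (LaurentPolynomial ℚ) M (T 1)).restrictScalars ℚ).charpoly.IsRoot 1 := by
  have hinj : Function.Injective fun m : M => (T 1 - 1 : LaurentPolynomial ℚ) • m :=
    OrzechProperty.injective_of_surjective_endomorphism (LinearMap.lsmul _ M (T 1 - 1)) hsurj
  refine ⟨finite_of_surjective_smul not_isUnit_T_one_sub_one hsurj, ⟨hinj, hsurj⟩,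
    fun hroot => ?_⟩
  obtain ⟨m, hm⟩ :=
    ((Module.End.hasEigenvalue_iff_isRoot_charpoly _ 1).2 hroot).exists_hasEigenvector
  refine hm.2 (hinj ?_)
  have hTm : (T 1 : LaurentPolynomial ℚ) • m = m := by simpa using hm.apply_eq_smul
  simp [sub_smul, hTm]
end

section
/- Let (R, m) be a commutative local ring with residue field k = R/m and let M be a finitely generated R-module. For every natural number i, the i-th exterior power ⋀ⁱ_R M is nonzero if and only if i ≤ dim_k (k ⊗_R M). -/
/-!
By Nakayama's lemma `M` is generated by `n = dim_k (k ⊗ M)` elements, so `⋀ⁱ M` is a quotient of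
`⋀ⁱ Rⁿ`, which is free of rank `n.choose i` and hence zero for `i > n`. Conversely `M` surjects
onto `k ⊗ M`, and `⋀ⁱ_R (k ⊗ M)` is nonzero as soon as `⋀ⁱ_k (k ⊗ M)`, of dimension
`n.choose i`, is: the `k`-alternating map `ιMulti` is in particular `R`-alternating.
-/

open TensorProduct

namespace AlternatingMap

variable (R : Type*) {S M N ι : Type*} [CommSemiring R] [Semiring S] [SMul R S]
  [AddCommMonoid M] [Module R M] [Module S M] [IsScalarTower R S M]
  [AddCommMonoid N] [Module R N] [Module S N] [IsScalarTower R S N]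

def restrictScalars (f : M [⋀^ι]→ₗ[S] N) : M [⋀^ι]→ₗ[R] N where
  toMultilinearMap := f.toMultilinearMap.restrictScalars R
  map_eq_zero_of_eq' := f.map_eq_zero_of_eq'

end AlternatingMap

namespace exteriorPower

variable {R M : Type*} [CommRing R] [AddCommGroup M] [Module R M] {n : ℕ}

theorem nontrivial_of_ne_zero {N : Type*} [AddCommGroup N] [Module R N]
    {f : M [⋀^Fin n]→ₗ[R] N} (hf : f ≠ 0) : Nontrivial (⋀[R]^n M) := by
  contrapose! hf
  rw [← alternatingMapLinearEquiv.map_eq_zero_iff]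
  exact LinearMap.ext fun x ↦ by rw [Subsingleton.elim x 0, map_zero, LinearMap.zero_apply]

theorem ιMulti_ne_zero [Nontrivial (⋀[R]^n M)] : ιMulti R n (M := M) ≠ 0 := by
  intro h
  have h_id := alternatingMapLinearEquiv_ιMulti (R := R) (n := n) (M := M)
  rw [h, map_zero] at h_id
  exact zero_ne_one h_id

theorem nontrivial_of_isScalarTower (S : Type*) [CommRing S] [Algebra R S] [Module S M]
    [IsScalarTower R S M] [Nontrivial (⋀[S]^n M)] : Nontrivial (⋀[R]^n M) :=
  nontrivial_of_ne_zero (f := (ιMulti S n).restrictScalars R) fun h ↦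
    ιMulti_ne_zero (AlternatingMap.ext fun v ↦ DFunLike.congr_fun h v)

theorem nontrivial_iff_le_finrank [Nontrivial R] [Module.Free R M] [Module.Finite R M] :
    Nontrivial (⋀[R]^n M) ↔ n ≤ Module.finrank R M := by
  rw [← Module.finrank_pos_iff_of_free (R := R), finrank_eq, Nat.pos_iff_ne_zero,
    Nat.choose_ne_zero_iff]

theorem le_card_of_span_eq_top [Nontrivial R] {ι : Type*} [Fintype ι] {v : ι → M}
    (hv : Submodule.span R (Set.range v) = ⊤) (h : Nontrivial (⋀[R]^n M)) :
    n ≤ Fintype.card ι := by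
  have hsurj : Function.Surjective (Finsupp.linearCombination R v) := by
    rw [← LinearMap.range_eq_top, Finsupp.range_linearCombination, hv]
  have := (map_surjective (n := n) hsurj).nontrivial
  simpa using nontrivial_iff_le_finrank.mp this

end exteriorPower

theorem IsLocalRing.exists_fin_finrank_span_eq_top {R M : Type*} [CommRing R] [IsLocalRing R]
    [AddCommGroup M] [Module R M] [Module.Finite R M] :
    ∃ v : Fin (Module.finrank (ResidueField R) (ResidueField R ⊗[R] M)) → M,
      Submodule.span R (Set.range v) = ⊤ := by
  let b := Module.finBasis (ResidueField R) (ResidueField R ⊗[R] M)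
  choose v hv using fun j ↦
    TensorProduct.mk_surjective R M (ResidueField R) Ideal.Quotient.mk_surjective (b j)
  exact ⟨v, span_eq_top_of_tmul_eq_basis v b hv⟩

open TensorProduct in
/-- For a finitely generated module `M` over a commutative local ring `(R, m)` with residue
field `k = R/m`, the `i`-th exterior power `⋀[R]^i M` is nonzero if and only if
`i ≤ dim_k (k ⊗[R] M)`. -/
theorem exteriorPower_nontrivial_iff
    {R M : Type*} [CommRing R] [IsLocalRing R] [AddCommGroup M] [Module R M]
    [Module.Finite R M] (i : ℕ) :
    Nontrivial (⋀[R]^i M) ↔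
      i ≤ Module.finrank (IsLocalRing.ResidueField R)
            (IsLocalRing.ResidueField R ⊗[R] M) := by
  set k := IsLocalRing.ResidueField R
  constructor
  · intro h
    obtain ⟨v, hv⟩ := IsLocalRing.exists_fin_finrank_span_eq_top (R := R) (M := M)
    simpa using exteriorPower.le_card_of_span_eq_top hv h
  · intro hi
    have : Nontrivial (⋀[k]^i (k ⊗[R] M)) := exteriorPower.nontrivial_iff_le_finrank.mpr hi
    have : Nontrivial (⋀[R]^i (k ⊗[R] M)) := exteriorPower.nontrivial_of_isScalarTower k
    exact (exteriorPower.map_surjective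
      (TensorProduct.mk_surjective R M k Ideal.Quotient.mk_surjective)).nontrivial
end

section
/- Let d ≥ 2 be an integer and let (λ₀, λ₁, λ₂) ∈ ℂ³ with (λ₀, λ₁, λ₂) ≠ (0,0,0). Set F = λ₀·x₀·(x₁^d − x₂^d) + λ₁·x₁·(x₂^d − x₀^d) + λ₂·x₂·(x₀^d − x₁^d) ∈ ℂ[x₀, x₁, x₂]. Then there exists (a₀, a₁, a₂) ∈ ℂ³ with (a₀, a₁, a₂) ≠ (0,0,0) at which F and all three partial derivatives ∂F/∂x₀, ∂F/∂x₁, ∂F/∂x₂ vanish if and only if (λ₀^d − λ₁^d)·(λ₁^d − λ₂^d)·(λ₂^d − λ₀^d) = 0. -/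
/-!
Write `uᵢ = λᵢ aᵢ` and `pᵢ = aᵢ ^ d`, indices mod 3. Multiplying `∂F/∂xᵢ (a) = 0` by `aᵢ` gives
the linear system `uᵢ (pᵢ₊₁ - pᵢ₊₂) = d pᵢ (uᵢ₊₁ - uᵢ₊₂)` in `u`, whose determinant
`(1 - d²)(p₀ - p₁)(p₁ - p₂)(p₂ - p₀)` vanishes only when two of the `pᵢ` agree. So if all `aᵢ ≠ 0`,
either `λ = 0`, or `pᵢ = pᵢ₊₁` and the equation of index `i + 2` forces `uᵢ = uᵢ₊₁`, whence
`λᵢ ^ d = λᵢ₊₁ ^ d`; points with a zero coordinate are handled directly.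

Conversely, if `λ₁ = c λ₀` with `c ^ d = 1`, the curve contains the line `x₀ = c x₁`, and its point
`(c, 1, s)` is singular as soon as `s` is a root of a trinomial of degree `d`. In both directions
`F (a) = 0` is automatic, by Euler's identity.
-/

section General

theorem Nat.cast_sq_ne_one {R : Type*} [Semiring R] [CharZero R] {d : ℕ} (hd : 2 ≤ d) :
    (d : R) ^ 2 ≠ 1 := by
  norm_cast
  nlinarith

theorem pow_eq_pow_of_mul_eq_mul {M : Type*} [CommMonoidWithZero M] [IsCancelMulZero M] {d : ℕ}
    {x y a b : M} (hab : a ^ d = b ^ d) (ha : a ≠ 0) (h : x * a = y * b) : x ^ d = y ^ d := by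
  have : x ^ d * a ^ d = y ^ d * a ^ d := by rw [← mul_pow, h, mul_pow, hab]
  exact mul_right_cancel₀ (pow_ne_zero d ha) this

theorem exists_pow_eq_one_and_eq_mul_of_pow_eq_pow {G : Type*} [CommGroupWithZero G] {d : ℕ}
    {x y : G} (hd : d ≠ 0) (h : x ^ d = y ^ d) : ∃ c : G, c ^ d = 1 ∧ y = c * x := by
  by_cases hx : x = 0
  · refine ⟨1, one_pow d, ?_⟩
    rw [hx, zero_pow hd, eq_comm, pow_eq_zero_iff hd] at h
    rw [h, hx, mul_zero]
  · exact ⟨y / x, by rw [div_pow, ← h, div_self (pow_ne_zero d hx)], (div_mul_cancel₀ y hx).symm⟩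

variable {R : Type*} [CommRing R] [NoZeroDivisors R]

theorem eq_zero_of_eq_mul_of_eq_mul {c x y : R} (hc : c ^ 2 ≠ 1) (hx : x = c * y)
    (hy : y = c * x) : x = 0 := by
  have : (1 - c ^ 2) * x = 0 := by linear_combination hx + c * hy
  simpa [sub_eq_zero, Ne.symm hc] using this

/-- The coefficients are the first row of the adjugate of the matrix of the system, whose
determinant is `(1 - c²)(p₀ - p₁)(p₁ - p₂)(p₂ - p₀)`. -/
theorem eq_zero_of_cyclic_system {c p₀ p₁ p₂ u₀ u₁ u₂ : R} (hc : c ^ 2 ≠ 1) (h₀₁ : p₀ ≠ p₁)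
    (h₁₂ : p₁ ≠ p₂) (h₂₀ : p₂ ≠ p₀)
    (e₀ : u₀ * (p₁ - p₂) = c * p₀ * (u₁ - u₂)) (e₁ : u₁ * (p₂ - p₀) = c * p₁ * (u₂ - u₀))
    (e₂ : u₂ * (p₀ - p₁) = c * p₂ * (u₀ - u₁)) : u₀ = 0 := by
  have : u₀ * ((1 - c ^ 2) * (p₀ - p₁) * (p₁ - p₂) * (p₂ - p₀)) = 0 := by
    linear_combination ((p₂ - p₀) * (p₀ - p₁) + c ^ 2 * p₁ * p₂) * e₀ +
      (c * p₀ * (p₀ - p₁) + c ^ 2 * p₀ * p₂) * e₁ + (c ^ 2 * p₀ * p₁ + c * p₀ * (p₀ - p₂)) * e₂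
  simpa [sub_eq_zero, Ne.symm hc, h₀₁, h₁₂, h₂₀] using this

end General

open Polynomial in
theorem IsAlgClosed.exists_root_trinomial {K : Type*} [Field K] [IsAlgClosed K] {d : ℕ}
    (hd : 2 ≤ d) {a : K} (ha : a ≠ 0) (b c : K) : ∃ s : K, a * s ^ d + b * s + c = 0 := by
  have hdeg : (C a * X ^ d + C b * X + C c).natDegree = d := by
    compute_degree!
    all_goals first | omega | simpa [show d ≠ 1 by omega, show d ≠ 0 by omega] using ha
  obtain ⟨s, hs⟩ := IsAlgClosed.exists_root (C a * X ^ d + C b * X + C c)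
    (natDegree_pos_iff_degree_pos.mp (by omega)).ne'
  exact ⟨s, by simpa using hs⟩

namespace Ruppert

variable {K : Type*} [Field K] {d : ℕ} {l₀ l₁ l₂ a₀ a₁ a₂ : K}

/-- `∂F/∂x₀ (a₀, a₁, a₂)`; the other two partial derivatives are its cyclic rotations. -/
def partialZero (d : ℕ) (l₀ l₁ l₂ a₀ a₁ a₂ : K) : K :=
  l₀ * (a₁ ^ d - a₂ ^ d) + d * a₀ ^ (d - 1) * (l₂ * a₂ - l₁ * a₁)

def IsCriticalPoint (d : ℕ) (l₀ l₁ l₂ a₀ a₁ a₂ : K) : Prop :=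
  partialZero d l₀ l₁ l₂ a₀ a₁ a₂ = 0 ∧ partialZero d l₁ l₂ l₀ a₁ a₂ a₀ = 0 ∧
    partialZero d l₂ l₀ l₁ a₂ a₀ a₁ = 0

theorem IsCriticalPoint.rotate (h : IsCriticalPoint d l₀ l₁ l₂ a₀ a₁ a₂) :
    IsCriticalPoint d l₁ l₂ l₀ a₁ a₂ a₀ :=
  ⟨h.2.1, h.2.2, h.1⟩

theorem mul_eq_mul_of_partialZero_eq_zero (hd : d ≠ 0)
    (h : partialZero d l₀ l₁ l₂ a₀ a₁ a₂ = 0) :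
    l₀ * a₀ * (a₁ ^ d - a₂ ^ d) = d * a₀ ^ d * (l₁ * a₁ - l₂ * a₂) := by
  unfold partialZero at h
  linear_combination a₀ * h + d * (l₁ * a₁ - l₂ * a₂) * pow_sub_one_mul hd a₀

theorem pow_eq_pow_of_isCriticalPoint_of_eq_zero [CharZero K] (hd : 2 ≤ d)
    (h : IsCriticalPoint d l₀ l₁ l₂ a₀ a₁ a₂) (ha₀ : a₀ = 0) (ha : ¬(a₁ = 0 ∧ a₂ = 0)) :
    l₀ ^ d = l₁ ^ d ∨ l₁ ^ d = l₂ ^ d ∨ l₂ ^ d = l₀ ^ d := by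
  have hd₀ : d ≠ 0 := by omega
  have hd₁ : d - 1 ≠ 0 := by omega
  obtain ⟨h₀, h₁, h₂⟩ := h
  simp only [partialZero, ha₀, zero_pow hd₀, zero_pow hd₁, mul_zero, zero_mul, sub_zero,
    zero_sub, add_zero] at h₀ h₁ h₂
  by_cases ha₁ : a₁ = 0
  · have ha₂ : a₂ ≠ 0 := fun ha₂ => ha ⟨ha₁, ha₂⟩
    simp [ha₁, ha₂, hd₀, hd₁] at h₀ h₁
    simp [h₀, h₁]
  by_cases ha₂ : a₂ = 0
  · simp [ha₁, ha₂, hd₀, hd₁] at h₀ h₂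
    simp [h₀, h₂]
  have hx : l₁ * a₁ * a₂ ^ d = 0 :=
    eq_zero_of_eq_mul_of_eq_mul (Nat.cast_sq_ne_one hd) (y := l₂ * a₂ * a₁ ^ d)
      (by linear_combination a₁ * h₁ + d * l₂ * a₂ * pow_sub_one_mul hd₀ a₁)
      (by linear_combination -a₂ * h₂ + d * l₁ * a₁ * pow_sub_one_mul hd₀ a₂)
  have hy : l₂ * a₂ * a₁ ^ d = 0 := by
    linear_combination -a₂ * h₂ + d * l₁ * a₁ * pow_sub_one_mul hd₀ a₂ + d * hx
  simp [ha₁, ha₂] at hx hy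
  simp [hx, hy]

theorem pow_eq_pow_of_isCriticalPoint_of_pow_eq [CharZero K] (hd : d ≠ 0)
    (h : IsCriticalPoint d l₀ l₁ l₂ a₀ a₁ a₂) (ha₀ : a₀ ≠ 0) (ha₂ : a₂ ≠ 0)
    (hp : a₀ ^ d = a₁ ^ d) : l₀ ^ d = l₁ ^ d := by
  have e := mul_eq_mul_of_partialZero_eq_zero hd h.2.2
  rw [hp, sub_self, mul_zero, eq_comm] at e
  have hu : l₀ * a₀ = l₁ * a₁ := by simpa [hd, ha₂, sub_eq_zero] using e
  exact pow_eq_pow_of_mul_eq_mul hp ha₀ hu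

theorem eq_zero_of_isCriticalPoint_of_pow_ne [CharZero K] (hd : 2 ≤ d)
    (h : IsCriticalPoint d l₀ l₁ l₂ a₀ a₁ a₂) (ha₀ : a₀ ≠ 0) (h₀₁ : a₀ ^ d ≠ a₁ ^ d)
    (h₁₂ : a₁ ^ d ≠ a₂ ^ d) (h₂₀ : a₂ ^ d ≠ a₀ ^ d) : l₀ = 0 := by
  have hd₀ : d ≠ 0 := by omega
  have hu := eq_zero_of_cyclic_system (Nat.cast_sq_ne_one hd) h₀₁ h₁₂ h₂₀
    (mul_eq_mul_of_partialZero_eq_zero hd₀ h.1) (mul_eq_mul_of_partialZero_eq_zero hd₀ h.2.1)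
    (mul_eq_mul_of_partialZero_eq_zero hd₀ h.2.2)
  simpa [ha₀] using hu

theorem pow_eq_pow_of_isCriticalPoint_of_ne_zero [CharZero K] (hd : 2 ≤ d)
    (h : IsCriticalPoint d l₀ l₁ l₂ a₀ a₁ a₂) (ha₀ : a₀ ≠ 0) (ha₁ : a₁ ≠ 0) (ha₂ : a₂ ≠ 0) :
    l₀ ^ d = l₁ ^ d ∨ l₁ ^ d = l₂ ^ d ∨ l₂ ^ d = l₀ ^ d := by
  have hd₀ : d ≠ 0 := by omega
  by_cases h₀₁ : a₀ ^ d = a₁ ^ d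
  · exact .inl (pow_eq_pow_of_isCriticalPoint_of_pow_eq hd₀ h ha₀ ha₂ h₀₁)
  by_cases h₁₂ : a₁ ^ d = a₂ ^ d
  · exact .inr (.inl (pow_eq_pow_of_isCriticalPoint_of_pow_eq hd₀ h.rotate ha₁ ha₀ h₁₂))
  by_cases h₂₀ : a₂ ^ d = a₀ ^ d
  · exact .inr (.inr (pow_eq_pow_of_isCriticalPoint_of_pow_eq hd₀ h.rotate.rotate ha₂ ha₁ h₂₀))
  have hl₀ := eq_zero_of_isCriticalPoint_of_pow_ne hd h ha₀ h₀₁ h₁₂ h₂₀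
  have hl₁ := eq_zero_of_isCriticalPoint_of_pow_ne hd h.rotate ha₁ h₁₂ h₂₀ h₀₁
  exact .inl (by rw [hl₀, hl₁])

theorem pow_eq_pow_of_isCriticalPoint [CharZero K] (hd : 2 ≤ d)
    (h : IsCriticalPoint d l₀ l₁ l₂ a₀ a₁ a₂) (ha : ¬(a₀ = 0 ∧ a₁ = 0 ∧ a₂ = 0)) :
    l₀ ^ d = l₁ ^ d ∨ l₁ ^ d = l₂ ^ d ∨ l₂ ^ d = l₀ ^ d := by
  by_cases ha₀ : a₀ = 0
  · exact pow_eq_pow_of_isCriticalPoint_of_eq_zero hd h ha₀ (by tauto)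
  by_cases ha₁ : a₁ = 0
  · have := pow_eq_pow_of_isCriticalPoint_of_eq_zero hd h.rotate ha₁ (by tauto)
    tauto
  by_cases ha₂ : a₂ = 0
  · have := pow_eq_pow_of_isCriticalPoint_of_eq_zero hd h.rotate.rotate ha₂ (by tauto)
    tauto
  exact pow_eq_pow_of_isCriticalPoint_of_ne_zero hd h ha₀ ha₁ ha₂

theorem exists_isCriticalPoint_of_pow_eq [IsAlgClosed K] (hd : 2 ≤ d) (h : l₀ ^ d = l₁ ^ d) :
    ∃ c s : K, IsCriticalPoint d l₀ l₁ l₂ c 1 s := by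
  have hd₀ : d ≠ 0 := by omega
  obtain ⟨c, hc, hl₁⟩ := exists_pow_eq_one_and_eq_mul_of_pow_eq_pow hd₀ h
  have hc' : c ^ (d - 1) * c = 1 := (pow_sub_one_mul hd₀ c).trans hc
  obtain ⟨s, hs⟩ : ∃ s, l₀ * s ^ d + -(d * l₂ * c ^ (d - 1)) * s + l₀ * (d - 1) = 0 := by
    by_cases hl₀ : l₀ = 0
    · exact ⟨0, by simp [hl₀]⟩
    · exact IsAlgClosed.exists_root_trinomial hd hl₀ _ _
  refine ⟨c, s, ?_, ?_, ?_⟩ <;> unfold partialZero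
  · linear_combination -hs - d * c ^ (d - 1) * hl₁ - d * l₀ * hc'
  · linear_combination (s ^ d - c ^ d) * hl₁ + c * hs - c * l₀ * hc + d * l₂ * s * hc'
  · linear_combination d * s ^ (d - 1) * hl₁ + l₂ * hc

theorem exists_isCriticalPoint [IsAlgClosed K] (hd : 2 ≤ d)
    (h : l₀ ^ d = l₁ ^ d ∨ l₁ ^ d = l₂ ^ d ∨ l₂ ^ d = l₀ ^ d) :
    ∃ a₀ a₁ a₂ : K, ¬(a₀ = 0 ∧ a₁ = 0 ∧ a₂ = 0) ∧ IsCriticalPoint d l₀ l₁ l₂ a₀ a₁ a₂ := by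
  rcases h with h | h | h
  · obtain ⟨c, s, hcs⟩ := exists_isCriticalPoint_of_pow_eq (l₂ := l₂) hd h
    exact ⟨c, 1, s, by simp, hcs⟩
  · obtain ⟨c, s, hcs⟩ := exists_isCriticalPoint_of_pow_eq (l₂ := l₀) hd h
    exact ⟨s, c, 1, by simp, hcs.rotate.rotate⟩
  · obtain ⟨c, s, hcs⟩ := exists_isCriticalPoint_of_pow_eq (l₂ := l₁) hd h
    exact ⟨1, s, c, by simp, hcs.rotate⟩

open MvPolynomial

noncomputable def ruppertPoly (d : ℕ) (l : Fin 3 → K) : MvPolynomial (Fin 3) K :=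
  C (l 0) * X 0 * (X 1 ^ d - X 2 ^ d) + C (l 1) * X 1 * (X 2 ^ d - X 0 ^ d)
    + C (l 2) * X 2 * (X 0 ^ d - X 1 ^ d)

theorem eval_pderiv_ruppertPoly (l a : Fin 3 → K) (i : Fin 3) :
    eval a (pderiv i (ruppertPoly d l)) =
      partialZero d (l i) (l (i + 1)) (l (i + 2)) (a i) (a (i + 1)) (a (i + 2)) := by
  fin_cases i <;> simp [ruppertPoly, partialZero, pderiv_X] <;> ring

theorem forall_eval_pderiv_ruppertPoly_eq_zero_iff {l a : Fin 3 → K} :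
    (∀ i, eval a (pderiv i (ruppertPoly d l)) = 0) ↔
      IsCriticalPoint d (l 0) (l 1) (l 2) (a 0) (a 1) (a 2) := by
  simp [eval_pderiv_ruppertPoly, Fin.forall_fin_succ, IsCriticalPoint]

/-- Euler's identity `∑ aᵢ ∂F/∂xᵢ (a) = (d + 1) F (a)`. -/
theorem eval_ruppertPoly_eq_zero_of_isCriticalPoint [CharZero K] (hd : d ≠ 0)
    {l a : Fin 3 → K} (h : IsCriticalPoint d (l 0) (l 1) (l 2) (a 0) (a 1) (a 2)) :
    eval a (ruppertPoly d l) = 0 := by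
  have e₀ := mul_eq_mul_of_partialZero_eq_zero hd h.1
  have e₁ := mul_eq_mul_of_partialZero_eq_zero hd h.2.1
  have e₂ := mul_eq_mul_of_partialZero_eq_zero hd h.2.2
  have : ((d : K) + 1) * eval a (ruppertPoly d l) = 0 := by
    simp only [ruppertPoly, map_add, map_sub, map_mul, map_pow, eval_C, eval_X]
    linear_combination e₀ + e₁ + e₂
  simpa [Nat.cast_add_one_ne_zero] using this

end Ruppert

open MvPolynomial in
theorem ruppert_singular_iff_general (d : ℕ) (hd : 2 ≤ d) (l : Fin 3 → ℂ)
    (F : MvPolynomial (Fin 3) ℂ)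
    (hF : F = C (l 0) * X 0 * (X 1 ^ d - X 2 ^ d)
            + C (l 1) * X 1 * (X 2 ^ d - X 0 ^ d)
            + C (l 2) * X 2 * (X 0 ^ d - X 1 ^ d)) :
    (∃ a : Fin 3 → ℂ, a ≠ 0 ∧ eval a F = 0 ∧ ∀ i : Fin 3, eval a (pderiv i F) = 0) ↔
      ((l 0) ^ d - (l 1) ^ d) * ((l 1) ^ d - (l 2) ^ d) * ((l 2) ^ d - (l 0) ^ d) = 0 := by
  obtain rfl : F = Ruppert.ruppertPoly d l := hF
  simp only [Ruppert.forall_eval_pderiv_ruppertPoly_eq_zero_iff, mul_eq_zero, sub_eq_zero,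
    or_assoc]
  constructor
  · rintro ⟨a, ha, -, h⟩
    exact Ruppert.pow_eq_pow_of_isCriticalPoint hd h
      (by simpa [funext_iff, Fin.forall_fin_succ] using ha)
  · intro h
    obtain ⟨a₀, a₁, a₂, ha, h⟩ := Ruppert.exists_isCriticalPoint hd h
    exact ⟨![a₀, a₁, a₂], by simpa [funext_iff, Fin.forall_fin_succ] using ha,
      Ruppert.eval_ruppertPoly_eq_zero_of_isCriticalPoint (by omega) h, h⟩

open MvPolynomial in
/-- For `d ≥ 2` and `(λ₀, λ₁, λ₂) ≠ (0,0,0)`, the Ruppert polynomial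
`F = λ₀ x₀ (x₁^d − x₂^d) + λ₁ x₁ (x₂^d − x₀^d) + λ₂ x₂ (x₀^d − x₁^d)` has a nonzero common
zero with all three of its partial derivatives if and only if
`(λ₀^d − λ₁^d)(λ₁^d − λ₂^d)(λ₂^d − λ₀^d) = 0`. -/
theorem ruppert_singular_iff (d : ℕ) (hd : 2 ≤ d) (l : Fin 3 → ℂ) (hl : l ≠ 0)
    (F : MvPolynomial (Fin 3) ℂ)
    (hF : F = C (l 0) * X 0 * (X 1 ^ d - X 2 ^ d)
            + C (l 1) * X 1 * (X 2 ^ d - X 0 ^ d)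
            + C (l 2) * X 2 * (X 0 ^ d - X 1 ^ d)) :
    (∃ a : Fin 3 → ℂ, a ≠ 0 ∧ eval a F = 0 ∧ ∀ i : Fin 3, eval a (pderiv i F) = 0) ↔
      ((l 0) ^ d - (l 1) ^ d) * ((l 1) ^ d - (l 2) ^ d) * ((l 2) ^ d - (l 0) ^ d) = 0 :=
  ruppert_singular_iff_general d hd l F hF
end
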